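/- arXiv:cs/0110025 — 3 statements merged into one kernel-verified Lean document; each statement's English description precedes it below -/
import Mathlib

section
/- Let G be a finite simple graph, let H be the ED-gadget graph of G, and let D be any vertex cover of H. Then for every edge {u,v} ∈ E(G), either all four vertices of the gadget G_u are contained in D or all four vertices of the gadget G_v are contained in D. -/
open scoped Classical

noncomputable section

/-- `C` is a vertex cover of `G`: every edge has an endpoint in `C`. -/
def IsVC {V : Type*} (G : SimpleGraph V) (C : Finset V) : Prop :=
  ∀ ⦃u w : V⦄, G.Adj u w → u ∈ C ∨ w ∈ C

/-- `mvc G` is the minimum size of a vertex cover of `G`. -/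
def mvc {V : Type*} [Fintype V] (G : SimpleGraph V) : ℕ :=
  sInf {n | ∃ C : Finset V, IsVC G C ∧ C.card = n}

/-- `M` is a matching of `G` (a set of pairwise disjoint edges of `G`). -/
def IsMatchingSet {V : Type*} (G : SimpleGraph V) (M : Finset (Sym2 V)) : Prop :=
  (∀ e ∈ M, e ∈ G.edgeSet) ∧
    ∀ e ∈ M, ∀ f ∈ M, e ≠ f → ∀ v, v ∈ e → v ∉ f

/-- `M` is a maximal matching of `G`: no edge of `G` can be added to it. -/
def IsMaximalMatchingSet {V : Type*} (G : SimpleGraph V) (M : Finset (Sym2 V)) : Prop :=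
  IsMatchingSet G M ∧ ∀ e ∈ G.edgeSet, e ∉ M → ¬ IsMatchingSet G (insert e M)

/-- `minEd G` is the minimum of `2·|M|` over all maximal matchings `M` of `G`
(the minimum size of a vertex cover producible by the edge deletion heuristic). -/
def minEd {V : Type*} [Fintype V] (G : SimpleGraph V) : ℕ :=
  sInf {n | ∃ M : Finset (Sym2 V), IsMaximalMatchingSet G M ∧ n = 2 * M.card}

/-- Degree of `v` inside the induced subgraph on the vertex set `S`. -/
def degIn {V : Type*} (G : SimpleGraph V) (S : Finset V) (v : V) : ℕ :=
  (S.filter fun w => G.Adj v w).card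

/-- An MDG run: a sequence of vertices, each of maximum degree in the currently
remaining induced subgraph, whose removal leaves no edges. -/
def IsMDGRun {V : Type*} (G : SimpleGraph V) : List V → Finset V → Prop
  | [], S => ∀ u ∈ S, ∀ w ∈ S, ¬ G.Adj u w
  | v :: L, S => v ∈ S ∧ (∀ u ∈ S, degIn G S u ≤ degIn G S v) ∧ IsMDGRun G L (S.erase v)

/-- `minMdg G`: minimum length of an MDG run on `G` (minimum size of a vertex cover
producible by the maximum-degree greedy heuristic). -/
def minMdg {V : Type*} [Fintype V] (G : SimpleGraph V) : ℕ :=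
  sInf {k | ∃ L : List V, L.length = k ∧ IsMDGRun G L Finset.univ}

/-- The edge relation of the 4-vertex ED gadget: edges {v₁,v₂}, {v₃,v₄}, {v₁,v₃}
(on indices 0,1,2,3). -/
def gadgetRel (i j : Fin 4) : Prop :=
  s(i, j) = s(0, 1) ∨ s(i, j) = s(2, 3) ∨ s(i, j) = s(0, 2)

lemma gadgetRel_symm {i j : Fin 4} (h : gadgetRel i j) : gadgetRel j i := by
  unfold gadgetRel at h ⊢
  rwa [Sym2.eq_swap]

lemma gadgetRel_irrefl (i : Fin 4) : ¬ gadgetRel i i := by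
  rintro (h | h | h) <;>
    (rw [Sym2.eq_iff] at h; rcases h with ⟨h1, h2⟩ | ⟨h1, h2⟩ <;> simp_all)

/-- The ED-gadget graph of `G`: four copies `v₁,…,v₄` of each vertex, gadget edges
inside each copy, and all 16 edges `{aᵢ,bⱼ}` for each edge `{a,b}` of `G`. -/
def edGadget {V : Type*} (G : SimpleGraph V) : SimpleGraph (V × Fin 4) where
  Adj x y := (x.1 = y.1 ∧ gadgetRel x.2 y.2) ∨ G.Adj x.1 y.1
  symm := by
    constructor
    rintro ⟨a, i⟩ ⟨b, j⟩ (⟨h1, h2⟩ | h)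
    · exact Or.inl ⟨h1.symm, gadgetRel_symm h2⟩
    · exact Or.inr h.symm
  loopless := by
    constructor
    rintro ⟨a, i⟩ (⟨-, h2⟩ | h)
    · exact gadgetRel_irrefl i h2
    · exact G.irrefl h

/-- The join of two vertex-disjoint graphs. -/
def graphJoin {α β : Type*} (G : SimpleGraph α) (H : SimpleGraph β) :
    SimpleGraph (α ⊕ β) where
  Adj x y :=
    match x, y with
    | .inl a, .inl b => G.Adj a b
    | .inr a, .inr b => H.Adj a b
    | _, _ => True
  symm := by
    constructor
    rintro (a | a) (b | b) h
    · exact G.adj_symm h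
    · exact trivial
    · exact trivial
    · exact H.adj_symm h
  loopless := by
    constructor
    rintro (a | a) h
    · exact G.irrefl h
    · exact H.irrefl h

/-- The disjoint union of two vertex-disjoint graphs. -/
def graphUnion {α β : Type*} (G : SimpleGraph α) (H : SimpleGraph β) :
    SimpleGraph (α ⊕ β) where
  Adj x y :=
    match x, y with
    | .inl a, .inl b => G.Adj a b
    | .inr a, .inr b => H.Adj a b
    | _, _ => False
  symm := by
    constructor
    rintro (a | a) (b | b) h
    · exact G.adj_symm h
    · exact h.elim
    · exact h.elim
    · exact H.adj_symm h
  loopless := by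
    constructor
    rintro (a | a) h
    · exact G.irrefl h
    · exact H.irrefl h

/-- Adjacency of the MDG-gadget graph: the gadget vertex `uᵢᵉ` for `e = {u,v}` is
encoded as `Sum.inr (⟨(u,v), _⟩, i)`.  Edges: `{uᵢᵉ, vⱼᵉ}` for all `i, j`, plus
`{u, u₁ᵉ}` and `{v, v₁ᵉ}`. -/
def mdgAdj {V : Type*} (G : SimpleGraph V) (Δ : ℕ) :
    (V ⊕ ({p : V × V // G.Adj p.1 p.2} × Fin (Δ + 1))) →
      (V ⊕ ({p : V × V // G.Adj p.1 p.2} × Fin (Δ + 1))) → Prop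
  | .inl _, .inl _ => False
  | .inl u, .inr (⟨(a, _), _⟩, i) => u = a ∧ i = 0
  | .inr (⟨(a, _), _⟩, i), .inl u => u = a ∧ i = 0
  | .inr (⟨(a, b), _⟩, _), .inr (⟨(c, d), _⟩, _) => a = d ∧ b = c

/-- The MDG-gadget graph of `G` with parameter `Δ`. -/
def mdgGadget {V : Type*} (G : SimpleGraph V) (Δ : ℕ) :
    SimpleGraph (V ⊕ ({p : V × V // G.Adj p.1 p.2} × Fin (Δ + 1))) where
  Adj := mdgAdj G Δ
  symm := by
    constructor
    rintro (u | ⟨⟨⟨a, b⟩, hab⟩, i⟩) (v | ⟨⟨⟨c, d⟩, hcd⟩, j⟩) h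
    · exact h.elim
    · exact h
    · exact h
    · exact ⟨h.2.symm, h.1.symm⟩
  loopless := by
    constructor
    rintro (u | ⟨⟨⟨a, b⟩, hab⟩, i⟩) h
    · exact h.elim
    · exact G.ne_of_adj hab h.1

/-- If `D` is a vertex cover of the ED-gadget graph of `G`, then for every
edge `{u,v}` of `G`, all four gadget vertices of `u` or all four gadget vertices of `v`
are in `D`. -/
theorem stmt2 {V : Type*} [Fintype V] (G : SimpleGraph V) (D : Finset (V × Fin 4))
    (hD : IsVC (edGadget G) D) {u v : V} (huv : G.Adj u v) :
    (∀ i : Fin 4, (u, i) ∈ D) ∨ (∀ i : Fin 4, (v, i) ∈ D) := by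
  by_cases h : ∀ i : Fin 4, (u, i) ∈ D
  · exact Or.inl h
  · push_neg at h
    obtain ⟨i, hi⟩ := h
    refine Or.inr fun j => ?_
    have := hD (u := (u, i)) (w := (v, j)) (Or.inr huv)
    tauto

end
end

section
/- Let ℓ and m be integers with 1 ≤ m ≤ ℓ < 2m, and let H₁ and H₂ be finite simple graphs satisfying min-ed(H₁) = mvc(H₁), min-ed(H₂) = mvc(H₂), and mvc(H₁) ≤ mvc(H₂). Set k = ℓ·|V(H₂)| + m·|V(H₁)|. Then there exists a finite simple graph Ĥ such that m·min-ed(Ĥ) = ℓ·(2km + m·mvc(H₂)) and mvc(Ĥ) = 2km + m·mvc(H₁). -/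
open scoped Classical

noncomputable section

section AuxGeneral

variable {V : Type*}

/-- Any matching is at most as large as any vertex cover. -/
lemma matching_card_le_vc {G : SimpleGraph V} {M : Finset (Sym2 V)} {C : Finset V}
    (hM : IsMatchingSet G M) (hC : IsVC G C) : M.card ≤ C.card := by
  have key : ∀ e ∈ M, ∃ v, v ∈ e ∧ v ∈ C := by
    intro e he
    have hedge := hM.1 e he
    induction e with
    | _ u w =>
      rw [SimpleGraph.mem_edgeSet] at hedge
      rcases hC hedge with h | h
      · exact ⟨u, by simp, h⟩
      · exact ⟨w, by simp, h⟩
  classical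
  rcases M.eq_empty_or_nonempty with rfl | ⟨e₀, he₀⟩
  · simp
  obtain ⟨v₀, -, -⟩ := key e₀ he₀
  have : Nonempty V := ⟨v₀⟩
  set f : Sym2 V → V := fun e => if h : ∃ v, v ∈ e ∧ v ∈ C then h.choose else Classical.arbitrary V
  apply Finset.card_le_card_of_injOn f
  · intro e he
    have h := key e he
    simp only [f, dif_pos h]
    exact h.choose_spec.2
  · intro e he e' he' hfe
    by_contra hne
    have h := key e he
    have h' := key e' he'
    have hv : f e ∈ e := by simp only [f, dif_pos h]; exact h.choose_spec.1
    have hv' : f e' ∈ e' := by simp only [f, dif_pos h']; exact h'.choose_spec.1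
    exact hM.2 e he e' he' hne (f e) hv (hfe ▸ hv')

/-- A maximal matching always exists in a finite graph. -/
lemma exists_maximal_matching [Fintype V] (G : SimpleGraph V) :
    ∃ M, IsMaximalMatchingSet G M := by
  classical
  obtain ⟨M, hMmem, hMmax⟩ := Finset.exists_max_image
    (Finset.univ.filter fun M : Finset (Sym2 V) => IsMatchingSet G M) Finset.card
    ⟨∅, Finset.mem_filter.mpr ⟨Finset.mem_univ _, by simp [IsMatchingSet]⟩⟩
  rw [Finset.mem_filter] at hMmem
  refine ⟨M, hMmem.2, ?_⟩
  intro e he hne hins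
  have := hMmax _ (Finset.mem_filter.mpr ⟨Finset.mem_univ _, hins⟩)
  rw [Finset.card_insert_of_notMem hne] at this
  omega

lemma minEd_spec [Fintype V] (G : SimpleGraph V) :
    ∃ M, IsMaximalMatchingSet G M ∧ minEd G = 2 * M.card := by
  have hne : {n | ∃ M : Finset (Sym2 V), IsMaximalMatchingSet G M ∧ n = 2 * M.card}.Nonempty := by
    obtain ⟨M, hM⟩ := exists_maximal_matching G
    exact ⟨2 * M.card, M, hM, rfl⟩
  obtain ⟨M, hM, h⟩ := Nat.sInf_mem hne
  exact ⟨M, hM, h⟩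

lemma even_minEd [Fintype V] (G : SimpleGraph V) : Even (minEd G) := by
  obtain ⟨M, -, h⟩ := minEd_spec G
  exact ⟨M.card, by omega⟩

lemma mvc_le_card [Fintype V] (G : SimpleGraph V) : mvc G ≤ Fintype.card V :=
  Nat.sInf_le ⟨Finset.univ, fun u w _ => Or.inl (Finset.mem_univ u), Finset.card_univ⟩

end AuxGeneral

section Transfer

variable {U W : Type*} (e : U ≃ W) (G : SimpleGraph U) (G' : SimpleGraph W)

lemma vc_image (h : ∀ a b, G.Adj a b ↔ G'.Adj (e a) (e b))
    {C : Finset U} (hC : IsVC G C) : IsVC G' (C.image e) := by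
  intro u w huw
  have : G.Adj (e.symm u) (e.symm w) := by
    rw [h]; simpa using huw
  rcases hC this with hh | hh
  · exact Or.inl (by simpa using Finset.mem_image_of_mem e hh)
  · exact Or.inr (by simpa using Finset.mem_image_of_mem e hh)

lemma vcSet_subset_of_equiv (h : ∀ a b, G.Adj a b ↔ G'.Adj (e a) (e b)) :
    {n | ∃ C : Finset U, IsVC G C ∧ C.card = n} ⊆
      {n | ∃ C : Finset W, IsVC G' C ∧ C.card = n} := by
  classical
  rintro n ⟨C, hC, hcard⟩
  exact ⟨C.image e, vc_image e G G' h hC,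
    by rw [Finset.card_image_of_injective _ e.injective, hcard]⟩

lemma mvc_eq_of_equiv [Fintype U] [Fintype W] (h : ∀ a b, G.Adj a b ↔ G'.Adj (e a) (e b)) :
    mvc G = mvc G' := by
  have h' : ∀ a b, G'.Adj a b ↔ G.Adj (e.symm a) (e.symm b) := by
    intro a b; rw [h]; simp
  unfold mvc
  congr 1
  exact Set.Subset.antisymm (vcSet_subset_of_equiv e G G' h)
    (vcSet_subset_of_equiv e.symm G' G h')

lemma matching_image (h : ∀ a b, G.Adj a b ↔ G'.Adj (e a) (e b))
    {M : Finset (Sym2 U)} (hM : IsMatchingSet G M) :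
    IsMatchingSet G' (M.image (Sym2.map e)) := by
  classical
  constructor
  · intro f hf
    rw [Finset.mem_image] at hf
    obtain ⟨g, hg, rfl⟩ := hf
    have hedge := hM.1 g hg
    induction g with
    | _ a b =>
      rw [SimpleGraph.mem_edgeSet] at hedge
      simpa [Sym2.map_pair_eq, SimpleGraph.mem_edgeSet] using (h a b).mp hedge
  · intro f hf f' hf' hne v hv hv'
    rw [Finset.mem_image] at hf hf'
    obtain ⟨g, hg, rfl⟩ := hf
    obtain ⟨g', hg', rfl⟩ := hf'
    have hgne : g ≠ g' := by rintro rfl; exact hne rfl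
    rw [Sym2.mem_map] at hv hv'
    obtain ⟨x, hx, rfl⟩ := hv
    obtain ⟨x', hx', hxx⟩ := hv'
    have : x = x' := e.injective hxx.symm
    exact hM.2 g hg g' hg' hgne x hx (this ▸ hx')

lemma maximal_matching_image (h : ∀ a b, G.Adj a b ↔ G'.Adj (e a) (e b))
    {M : Finset (Sym2 U)} (hM : IsMaximalMatchingSet G M) :
    IsMaximalMatchingSet G' (M.image (Sym2.map e)) := by
  classical
  have h' : ∀ a b, G'.Adj a b ↔ G.Adj (e.symm a) (e.symm b) := by
    intro a b; rw [h]; simp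
  refine ⟨matching_image e G G' h hM.1, ?_⟩
  intro f hf hfM hins
  have hmapmap : ∀ g : Sym2 W, Sym2.map e (Sym2.map e.symm g) = g := by
    intro g; induction g with
    | _ a b => simp
  have hmapmap' : ∀ g : Sym2 U, Sym2.map e.symm (Sym2.map e g) = g := by
    intro g; induction g with
    | _ a b => simp
  have hgedge : Sym2.map e.symm f ∈ G.edgeSet := by
    induction f with
    | _ a b =>
      rw [Sym2.map_pair_eq, SimpleGraph.mem_edgeSet, h]
      simpa using hf
  set g := Sym2.map e.symm f with hgdef
  have hgM : g ∉ M := by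
    intro hgM
    exact hfM (by
      rw [Finset.mem_image]
      exact ⟨g, hgM, hmapmap f⟩)
  apply hM.2 g hgedge hgM
  have := matching_image e.symm G' G h' hins
  have himg : (insert f (M.image (Sym2.map e))).image (Sym2.map e.symm) = insert g M := by
    rw [Finset.image_insert, Finset.image_image]
    congr 1
    ext x
    simp only [Finset.mem_image, Function.comp]
    constructor
    · rintro ⟨y, hy, rfl⟩; rwa [hmapmap']
    · intro hx; exact ⟨x, hx, hmapmap' x⟩
  rwa [himg] at this

lemma mmSet_subset_of_equiv (h : ∀ a b, G.Adj a b ↔ G'.Adj (e a) (e b)) :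
    {n | ∃ M : Finset (Sym2 U), IsMaximalMatchingSet G M ∧ n = 2 * M.card} ⊆
      {n | ∃ M : Finset (Sym2 W), IsMaximalMatchingSet G' M ∧ n = 2 * M.card} := by
  classical
  rintro n ⟨M, hM, hcard⟩
  refine ⟨M.image (Sym2.map e), maximal_matching_image e G G' h hM, ?_⟩
  rw [Finset.card_image_of_injective _ (Sym2.map.injective e.injective)]
  exact hcard

lemma minEd_eq_of_equiv [Fintype U] [Fintype W]
    (h : ∀ a b, G.Adj a b ↔ G'.Adj (e a) (e b)) : minEd G = minEd G' := by
  have h' : ∀ a b, G'.Adj a b ↔ G.Adj (e.symm a) (e.symm b) := by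
    intro a b; rw [h]; simp
  unfold minEd
  congr 1
  exact Set.Subset.antisymm (mmSet_subset_of_equiv e G G' h)
    (mmSet_subset_of_equiv e.symm G' G h')

end Transfer

section Gadget

lemma mem_insert_iff' {α : Type*} {i : DecidableEq α} {a b : α} {s : Finset α} :
    a ∈ @insert _ _ (@Finset.instInsert _ i) b s ↔ a = b ∨ a ∈ s := @Finset.mem_insert _ i _ _ _

/-- Path relation on `Fin 4`: edges 0-1, 1-2, 2-3. -/
def pRel (a b : Fin 4) : Prop := a.val + 1 = b.val ∨ b.val + 1 = a.val

/-- Disjoint union of `s` copies of the path `P₄` and `t` copies of `K₂`. -/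
def pathGraph (s t : ℕ) : SimpleGraph ((Fin s × Fin 4) ⊕ (Fin t × Fin 2)) where
  Adj x y :=
    match x, y with
    | .inl (i, a), .inl (j, b) => i = j ∧ pRel a b
    | .inr (i, a), .inr (j, b) => i = j ∧ a ≠ b
    | _, _ => False
  symm := by
    constructor
    rintro (⟨i, a⟩ | ⟨i, a⟩) (⟨j, b⟩ | ⟨j, b⟩) h
    · exact ⟨h.1.symm, h.2.symm⟩
    · exact h.elim
    · exact h.elim
    · exact ⟨h.1.symm, h.2.symm⟩
  loopless := by
    constructor
    rintro (⟨i, a⟩ | ⟨i, a⟩) h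
    · rcases h.2 with h2 | h2 <;> omega
    · exact h.2 rfl

variable {s t : ℕ}

/-- The component of a vertex. -/
def comp : (Fin s × Fin 4) ⊕ (Fin t × Fin 2) → Fin s ⊕ Fin t :=
  Sum.map Prod.fst Prod.fst

lemma adj_comp {u w : (Fin s × Fin 4) ⊕ (Fin t × Fin 2)}
    (h : (pathGraph s t).Adj u w) : comp u = comp w := by
  rcases u with ⟨i, a⟩ | ⟨i, a⟩ <;> rcases w with ⟨j, b⟩ | ⟨j, b⟩
  · obtain ⟨rfl, -⟩ := h; rfl
  · exact h.elim
  · exact h.elim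
  · obtain ⟨rfl, -⟩ := h; rfl

lemma edge_comp {e : Sym2 ((Fin s × Fin 4) ⊕ (Fin t × Fin 2))}
    (he : e ∈ (pathGraph s t).edgeSet) :
    ∀ v ∈ e, ∀ w ∈ e, comp v = comp w := by
  induction e with
  | _ x y =>
    rw [SimpleGraph.mem_edgeSet] at he
    intro v hv w hw
    rw [Sym2.mem_iff] at hv hw
    rcases hv with rfl | rfl <;> rcases hw with rfl | rfl
    · rfl
    · exact adj_comp he
    · exact (adj_comp he).symm
    · rfl

/-- Generic lemma: an injectively tagged family of pairwise "component-disjoint"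
edges forms a matching. -/
lemma tagged_matching {V C : Type*} [Fintype C] [DecidableEq (Sym2 V)]
    (G : SimpleGraph V) (f : C → Sym2 V) (τ : V → C)
    (hτ : ∀ c v, v ∈ f c → τ v = c) (hedge : ∀ c, f c ∈ G.edgeSet) :
    IsMatchingSet G (Finset.univ.image f) := by
  constructor
  · intro e he
    rw [Finset.mem_image] at he
    obtain ⟨c, -, rfl⟩ := he
    exact hedge c
  · intro e he e' he' hne v hv hv'
    rw [Finset.mem_image] at he he'
    obtain ⟨c, -, rfl⟩ := he
    obtain ⟨c', -, rfl⟩ := he'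
    have : c = c' := by rw [← hτ c v hv, hτ c' v hv']
    exact hne (by rw [this])

lemma tagged_injective {V C : Type*} (f : C → Sym2 V) (τ : V → C)
    (hτ : ∀ c v, v ∈ f c → τ v = c) : Function.Injective f := by
  intro c c' hcc
  have hv := Sym2.out_fst_mem (f c)
  rw [← hτ c _ hv, hτ c' _ (hcc ▸ hv)]

/-- The base edge of each component: edge 1-2 of a path, edge 0-1 of a `K₂`. -/
def ebase : Fin s ⊕ Fin t → Sym2 ((Fin s × Fin 4) ⊕ (Fin t × Fin 2))
  | .inl i => s(Sum.inl (i, 1), Sum.inl (i, 2))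
  | .inr j => s(Sum.inr (j, 0), Sum.inr (j, 1))

lemma ebase_comp (c : Fin s ⊕ Fin t) (v) (hv : v ∈ ebase c) : comp v = c := by
  rcases c with i | j <;>
    (simp only [ebase, Sym2.mem_iff] at hv; rcases hv with rfl | rfl <;> rfl)

lemma ebase_edge (c : Fin s ⊕ Fin t) : ebase c ∈ (pathGraph s t).edgeSet := by
  rcases c with i | j
  · exact ⟨rfl, Or.inl (by decide)⟩
  · exact ⟨rfl, by decide⟩

/-- Every edge of `pathGraph` meets the base edge of its component. -/
lemma edge_meets_ebase {e : Sym2 ((Fin s × Fin 4) ⊕ (Fin t × Fin 2))}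
    (he : e ∈ (pathGraph s t).edgeSet) :
    ∃ c, ∃ v, v ∈ e ∧ v ∈ ebase c := by
  induction e with
  | _ x y =>
    rw [SimpleGraph.mem_edgeSet] at he
    rcases x with ⟨i, a⟩ | ⟨i, a⟩ <;> rcases y with ⟨j, b⟩ | ⟨j, b⟩
    · obtain ⟨rfl, hab⟩ := he
      have h4a : a.val < 4 := a.isLt
      have h4b : b.val < 4 := b.isLt
      have : a.val = 1 ∨ a.val = 2 ∨ b.val = 1 ∨ b.val = 2 := by
        rcases hab with h | h <;> omega
      rcases this with h | h | h | h
      · exact ⟨Sum.inl i, Sum.inl (i, a), by simp, by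
          rw [show a = 1 from Fin.ext h]; simp [ebase]⟩
      · exact ⟨Sum.inl i, Sum.inl (i, a), by simp, by
          rw [show a = 2 from Fin.ext h]; simp [ebase]⟩
      · exact ⟨Sum.inl i, Sum.inl (i, b), by simp, by
          rw [show b = 1 from Fin.ext h]; simp [ebase]⟩
      · exact ⟨Sum.inl i, Sum.inl (i, b), by simp, by
          rw [show b = 2 from Fin.ext h]; simp [ebase]⟩
    · exact he.elim
    · exact he.elim
    · obtain ⟨rfl, hab⟩ := he
      rcases (by omega : a.val = 0 ∨ b.val = 0) with h | h
      · exact ⟨Sum.inr i, Sum.inr (i, a), by simp, by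
          rw [show a = 0 from Fin.ext h]; simp [ebase]⟩
      · exact ⟨Sum.inr i, Sum.inr (i, b), by simp, by
          rw [show b = 0 from Fin.ext h]; simp [ebase]⟩

lemma maximal_Mup : IsMaximalMatchingSet (pathGraph s t) (Finset.univ.image ebase) := by
  classical
  refine ⟨tagged_matching _ ebase comp ebase_comp ebase_edge, ?_⟩
  intro e he hne hins
  obtain ⟨c, v, hv, hvb⟩ := edge_meets_ebase he
  have hnee : e ≠ ebase c := by
    rintro rfl
    exact hne (Finset.mem_image_of_mem _ (Finset.mem_univ c))
  refine hins.2 e ?_ (ebase c) ?_ hnee v hv hvb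
  · exact mem_insert_iff'.mpr (Or.inl rfl)
  · exact mem_insert_iff'.mpr (Or.inr (Finset.mem_image_of_mem _ (Finset.mem_univ c)))

lemma card_Mup : (Finset.univ.image (ebase (s := s) (t := t))).card = s + t := by
  rw [Finset.card_image_of_injective _ (tagged_injective ebase comp ebase_comp)]
  simp

lemma minEd_pathGraph : minEd (pathGraph s t) = 2 * (s + t) := by
  classical
  have hmem : 2 * (s + t) ∈
      {n | ∃ M, IsMaximalMatchingSet (pathGraph s t) M ∧ n = 2 * M.card} :=
    ⟨Finset.univ.image ebase, maximal_Mup, by rw [card_Mup]⟩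
  refine le_antisymm (Nat.sInf_le hmem) (le_csInf ⟨_, hmem⟩ ?_)
  rintro n ⟨M, hM, rfl⟩
  -- every maximal matching has at least one edge meeting each base edge
  have key : ∀ c, ∃ f ∈ M, ∃ v, v ∈ f ∧ v ∈ ebase c := by
    intro c
    by_cases hc : ebase c ∈ M
    · exact ⟨ebase c, hc, (ebase c).out.1, Sym2.out_fst_mem _, Sym2.out_fst_mem _⟩
    by_contra hno
    push_neg at hno
    apply hM.2 (ebase c) (ebase_edge c) hc
    constructor
    · intro g hg
      rcases mem_insert_iff'.mp hg with rfl | hg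
      · exact ebase_edge c
      · exact hM.1.1 g hg
    · intro g hg g' hg' hne v hv
      rcases mem_insert_iff'.mp hg with rfl | hg <;>
        rcases mem_insert_iff'.mp hg' with rfl | hg'
      · exact absurd rfl hne
      · intro hv'; exact hno g' hg' v hv' hv
      · exact hno g hg v hv
      · exact hM.1.2 g hg g' hg' hne v hv
  choose g hgM vtx hvtx hvtxb using key
  have hinj : Set.InjOn g (Finset.univ : Finset (Fin s ⊕ Fin t)) := by
    intro c hc c' hc' hgc
    have h1 : comp (vtx c) = c := ebase_comp c _ (hvtxb c)
    have h2 : comp (vtx c') = c' := ebase_comp c' _ (hvtxb c')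
    have := edge_comp (hM.1.1 (g c) (hgM c)) (vtx c) (hvtx c) (vtx c')
      (hgc ▸ hvtx c')
    rw [← h1, ← h2, this]
  have hcard : s + t ≤ M.card := by
    have := Finset.card_le_card_of_injOn g (fun c _ => hgM c) hinj
    simpa using this
  omega

end Gadget

section MVCGadget

variable {s t : ℕ}

/-- The big matching: both outer edges of each path, plus each `K₂`. -/
def bigE : Fin s ⊕ Fin s ⊕ Fin t → Sym2 ((Fin s × Fin 4) ⊕ (Fin t × Fin 2))
  | .inl i => s(Sum.inl (i, 0), Sum.inl (i, 1))
  | .inr (.inl i) => s(Sum.inl (i, 2), Sum.inl (i, 3))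
  | .inr (.inr j) => s(Sum.inr (j, 0), Sum.inr (j, 1))

def btag : (Fin s × Fin 4) ⊕ (Fin t × Fin 2) → Fin s ⊕ Fin s ⊕ Fin t
  | .inl (i, a) => if a.val ≤ 1 then .inl i else .inr (.inl i)
  | .inr (j, _) => .inr (.inr j)

lemma bigE_tag (c) (v) (hv : v ∈ bigE (s := s) (t := t) c) : btag v = c := by
  rcases c with i | i | j <;>
    (simp only [bigE, Sym2.mem_iff] at hv; rcases hv with rfl | rfl <;> (simp [btag]; try decide))

lemma bigE_edge (c) : bigE (s := s) (t := t) c ∈ (pathGraph s t).edgeSet := by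
  rcases c with i | i | j
  · exact ⟨rfl, Or.inl (by decide)⟩
  · exact ⟨rfl, Or.inl (by decide)⟩
  · exact ⟨rfl, by decide⟩

/-- Vertex cover: vertices 1 and 2 of each path, vertex 0 of each `K₂`. -/
def coverC (s t : ℕ) : Finset ((Fin s × Fin 4) ⊕ (Fin t × Fin 2)) :=
  (Finset.univ.image fun i : Fin s => Sum.inl (i, (1 : Fin 4))) ∪
  (Finset.univ.image fun i : Fin s => Sum.inl (i, (2 : Fin 4))) ∪
  (Finset.univ.image fun j : Fin t => Sum.inr (j, (0 : Fin 2)))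

lemma card_coverC : (coverC s t).card = 2 * s + t := by
  classical
  have h1 : Function.Injective
      (fun i : Fin s => (Sum.inl (i, (1 : Fin 4)) : (Fin s × Fin 4) ⊕ (Fin t × Fin 2))) := by
    intro a b h; simpa using h
  have h2 : Function.Injective
      (fun i : Fin s => (Sum.inl (i, (2 : Fin 4)) : (Fin s × Fin 4) ⊕ (Fin t × Fin 2))) := by
    intro a b h; simpa using h
  have h3 : Function.Injective
      (fun j : Fin t => (Sum.inr (j, (0 : Fin 2)) : (Fin s × Fin 4) ⊕ (Fin t × Fin 2))) := by
    intro a b h; simpa using h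
  have d12 : Disjoint (Finset.univ.image fun i : Fin s =>
      (Sum.inl (i, (1 : Fin 4)) : (Fin s × Fin 4) ⊕ (Fin t × Fin 2)))
      (Finset.univ.image fun i : Fin s => Sum.inl (i, (2 : Fin 4))) := by
    rw [Finset.disjoint_left]
    rintro x hx hx'
    simp only [Finset.mem_image, Finset.mem_univ, true_and] at hx hx'
    obtain ⟨a, rfl⟩ := hx
    obtain ⟨b, hb⟩ := hx'
    simp [Prod.ext_iff] at hb
  have d123 : Disjoint ((Finset.univ.image fun i : Fin s =>
      (Sum.inl (i, (1 : Fin 4)) : (Fin s × Fin 4) ⊕ (Fin t × Fin 2))) ∪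
      (Finset.univ.image fun i : Fin s => Sum.inl (i, (2 : Fin 4))))
      (Finset.univ.image fun j : Fin t => Sum.inr (j, (0 : Fin 2))) := by
    rw [Finset.disjoint_left]
    rintro x hx hx'
    simp only [Finset.mem_union, Finset.mem_image, Finset.mem_univ, true_and] at hx hx'
    obtain ⟨b, hb⟩ := hx'
    rcases hx with ⟨a, rfl⟩ | ⟨a, rfl⟩ <;> simp at hb
  rw [coverC, Finset.card_union_of_disjoint d123, Finset.card_union_of_disjoint d12,
    Finset.card_image_of_injective _ h1, Finset.card_image_of_injective _ h2,
    Finset.card_image_of_injective _ h3]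
  simp; omega

lemma coverC_vc : IsVC (pathGraph s t) (coverC s t) := by
  rintro (⟨i, a⟩ | ⟨i, a⟩) (⟨j, b⟩ | ⟨j, b⟩) h
  · obtain ⟨rfl, hab⟩ := h
    have h4a := a.isLt
    have h4b := b.isLt
    have : a.val = 1 ∨ a.val = 2 ∨ b.val = 1 ∨ b.val = 2 := by
      rcases hab with h | h <;> omega
    rcases this with h | h | h | h
    · exact Or.inl (by rw [show a = 1 from Fin.ext h]; simp [coverC])
    · exact Or.inl (by rw [show a = 2 from Fin.ext h]; simp [coverC])
    · exact Or.inr (by rw [show b = 1 from Fin.ext h]; simp [coverC])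
    · exact Or.inr (by rw [show b = 2 from Fin.ext h]; simp [coverC])
  · exact h.elim
  · exact h.elim
  · obtain ⟨rfl, hab⟩ := h
    have hne : a.val ≠ b.val := by simpa [Fin.ext_iff] using hab
    have h2a := a.isLt
    have h2b := b.isLt
    rcases (by omega : a.val = 0 ∨ b.val = 0) with h | h
    · exact Or.inl (by rw [show a = 0 from Fin.ext h]; simp [coverC])
    · exact Or.inr (by rw [show b = 0 from Fin.ext h]; simp [coverC])

lemma mvc_pathGraph : mvc (pathGraph s t) = 2 * s + t := by
  classical
  have hmem : 2 * s + t ∈ {n | ∃ C, IsVC (pathGraph s t) C ∧ C.card = n} :=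
    ⟨coverC s t, coverC_vc, card_coverC⟩
  refine le_antisymm (Nat.sInf_le hmem) (le_csInf ⟨_, hmem⟩ ?_)
  rintro n ⟨C, hC, rfl⟩
  have hmatch := tagged_matching (pathGraph s t) bigE btag bigE_tag bigE_edge
  have hle := matching_card_le_vc hmatch hC
  have hcard : (Finset.univ.image (bigE (s := s) (t := t))).card = 2 * s + t := by
    rw [Finset.card_image_of_injective _ (tagged_injective bigE btag bigE_tag)]
    simp only [Finset.card_univ, Fintype.card_sum, Fintype.card_fin]
    omega
  omega

end MVCGadget

/-- Given `1 ≤ m ≤ ℓ < 2m` and graphs `H₁, H₂` with `min-ed(Hᵢ) = mvc(Hᵢ)`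
and `mvc(H₁) ≤ mvc(H₂)`, setting `k = ℓ·|V(H₂)| + m·|V(H₁)|`, there is a graph `Ĥ` with
`m·min-ed(Ĥ) = ℓ·(2km + m·mvc(H₂))` and `mvc(Ĥ) = 2km + m·mvc(H₁)`. -/
theorem stmt7 (l m : ℕ) (hm : 1 ≤ m) (hml : m ≤ l) (hl : l < 2 * m)
    {V₁ V₂ : Type*} [Fintype V₁] [Fintype V₂]
    (H₁ : SimpleGraph V₁) (H₂ : SimpleGraph V₂)
    (h₁ : minEd H₁ = mvc H₁) (h₂ : minEd H₂ = mvc H₂)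
    (h₁₂ : mvc H₁ ≤ mvc H₂)
    (k : ℕ) (hk : k = l * Fintype.card V₂ + m * Fintype.card V₁) :
    ∃ (n : ℕ) (Hhat : SimpleGraph (Fin n)),
      m * minEd Hhat = l * (2 * k * m + m * mvc H₂) ∧
      mvc Hhat = 2 * k * m + m * mvc H₁ := by
  classical
  have hE1 : Even (mvc H₁) := by rw [← h₁]; exact even_minEd H₁
  have hE2 : Even (mvc H₂) := by rw [← h₂]; exact even_minEd H₂
  obtain ⟨d₁, hd₁⟩ := hE1
  obtain ⟨d₂, hd₂⟩ := hE2
  have hd12 : d₁ ≤ d₂ := by omega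
  have hc2le : mvc H₂ ≤ Fintype.card V₂ := mvc_le_card H₂
  have pk : l * Fintype.card V₂ ≤ k := by omega
  have p2 : l * mvc H₂ ≤ l * Fintype.card V₂ := Nat.mul_le_mul (le_refl l) hc2le
  have e1 : l * mvc H₂ = l * d₂ + l * d₂ := by rw [hd₂]; ring
  have hld2k : l * d₂ ≤ k := by omega
  have pkm : k * m ≤ k * l := Nat.mul_le_mul (le_refl k) hml
  have pmd : m * d₁ ≤ l * d₂ := Nat.mul_le_mul hml hd12
  have hl' : l + 1 ≤ 2 * m := hl
  have pkl : k * (l + 1) ≤ k * (2 * m) := Nat.mul_le_mul (le_refl k) hl'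
  have q1 : k * (l + 1) = k * l + k := by ring
  have q2 : k * (2 * m) = 2 * (k * m) := by ring
  obtain ⟨s', t', hst1, hst2⟩ :
      ∃ s' t', s' + t' = k * l + l * d₂ ∧ 2 * s' + t' = 2 * (k * m + m * d₁) :=
    ⟨2 * (k * m + m * d₁) - (k * l + l * d₂), 2 * ((k * l + l * d₂) - (k * m + m * d₁)),
      by omega, by omega⟩
  have hcardV : Fintype.card ((Fin s' × Fin 4) ⊕ (Fin t' × Fin 2)) = 4 * s' + 2 * t' := by
    simp only [Fintype.card_sum, Fintype.card_prod, Fintype.card_fin]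
    ring
  let e := Fintype.equivFinOfCardEq hcardV
  let Hhat : SimpleGraph (Fin (4 * s' + 2 * t')) :=
    { Adj := fun x y => (pathGraph s' t').Adj (e.symm x) (e.symm y)
      symm := ⟨fun x y h => (pathGraph s' t').adj_symm h⟩
      loopless := ⟨fun x h => (pathGraph s' t').irrefl h⟩ }
  have hcompat : ∀ a b, (pathGraph s' t').Adj a b ↔ Hhat.Adj (e a) (e b) := by
    intro a b
    show _ ↔ (pathGraph s' t').Adj (e.symm (e a)) (e.symm (e b))
    rw [Equiv.symm_apply_apply, Equiv.symm_apply_apply]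
  have hminEd : minEd Hhat = 2 * (s' + t') := by
    rw [← minEd_eq_of_equiv e (pathGraph s' t') Hhat hcompat, minEd_pathGraph]
  have hmvc : mvc Hhat = 2 * s' + t' := by
    rw [← mvc_eq_of_equiv e (pathGraph s' t') Hhat hcompat, mvc_pathGraph]
  refine ⟨4 * s' + 2 * t', Hhat, ?_, ?_⟩
  · rw [hminEd, hst1, hd₂]
    ring
  · rw [hmvc, hst2, hd₁]
    ring

end
end

section
/- For all positive integers n₁, n₂, δ, μ satisfying μ·(ln μ − 2·ln(δ+2) − 1) ≥ n₁ + n₂, there exists a bipartite finite simple graph G with the following properties: (1) V(G) = V ∪ Ṽ with V ∩ Ṽ = ∅, where V = {u_1,…,u_{n₁}, w_1,…,w_μ, z_1,…,z_{n₂}} and Ṽ = {ũ_1,…,ũ_{n₁}, w̃_1,…,w̃_μ}, and both V and Ṽ are independent sets in G; (2) G contains the edges {u_i, ũ_i} for 1 ≤ i ≤ n₁ and {w_j, w̃_j} for 1 ≤ j ≤ μ; (3) every vertex ũ_i (1 ≤ i ≤ n₁) has degree 1 in G; (4) for every induced subgraph S of G obtained by deleting vertices from V such that V ∩ V(S) ≠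 ∅, the maximum degree in S over the vertices of V ∩ V(S) exceeds the maximum degree in S over the vertices of Ṽ by more than δ. -/
open scoped Classical

noncomputable section

namespace Stmt12Aux

lemma sum_inv_telescope (a : ℕ) (ha : 0 < a) (b : ℕ) :
    Real.log (b + 1) - Real.log a ≤ ∑ ℓ ∈ Finset.Icc a b, (1 / ℓ : ℝ) := by
  induction b with
  | zero =>
    rw [Finset.Icc_eq_empty (by omega)]
    simp only [Finset.sum_empty, Nat.cast_zero, zero_add, Real.log_one]
    have : (0:ℝ) ≤ Real.log a := Real.log_nonneg (by exact_mod_cast ha)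
    linarith
  | succ n ih =>
    by_cases hab : a ≤ n + 1
    · rw [Finset.sum_Icc_succ_top hab]
      have hstep : Real.log (↑(n + 1) + 1) - Real.log (↑n + 1) ≤ 1 / (↑(n + 1) : ℝ) := by
        have hpos : (0:ℝ) < (↑n + 1) := by positivity
        have h1 : Real.log ((↑(n+1) + 1) / (↑n + 1) : ℝ) ≤ (↑(n+1) + 1) / (↑n + 1) - 1 :=
          Real.log_le_sub_one_of_pos (by positivity)
        rw [Real.log_div (by positivity) (by positivity)] at h1
        have : ((↑(n:ℕ)+1+1)/(↑n+1) - 1 : ℝ) = 1/(↑n+1) := by field_simp; ring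
        push_cast at h1 ⊢
        rw [this] at h1
        linarith
      push_cast at ih hstep ⊢
      linarith
    · rw [Finset.Icc_eq_empty (by omega)]
      simp only [Finset.sum_empty]
      have : Real.log (↑(n+1) + 1) ≤ Real.log a := by
        apply Real.log_le_log (by positivity)
        push_cast; exact_mod_cast by omega
      push_cast at this ⊢
      linarith

lemma capacity (n₁ n₂ δ μ : ℕ) (hδ : 0 < δ) (hn : 0 < n₁ + n₂) (hμ : 0 < μ)
    (h : (μ : ℝ) * (Real.log μ - 2 * Real.log (δ + 2) - 1) ≥ n₁ + n₂) :
    n₁ + μ + n₂ ≤ ∑ ℓ ∈ Finset.Icc (δ + 3) μ, μ / ℓ := by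
  have hμR : (0:ℝ) < μ := by positivity
  have hnR : (0:ℝ) < n₁ + n₂ := by exact_mod_cast hn
  have hnR' : (0:ℝ) < (n₁:ℝ) + n₂ := by push_cast at hnR ⊢; linarith
  have hfac : 0 < Real.log μ - 2 * Real.log (δ + 2) - 1 := by nlinarith
  -- μ > 2(δ+2)
  have hd2 : (1:ℝ) ≤ (δ:ℝ) + 2 := by push_cast; linarith [Nat.one_le_iff_ne_zero.mpr (Nat.pos_iff_ne_zero.mp hδ)]
  have hlogd2 : (0:ℝ) ≤ Real.log (δ + 2) := Real.log_nonneg hd2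
  have hlog2 : Real.log (2 * ((δ:ℝ) + 2)) < Real.log μ := by
    rw [Real.log_mul (by norm_num) (by positivity)]
    have h2 : Real.log 2 < 1 := by linarith [Real.log_two_lt_d9]
    linarith
  have hμ2d : (2 * ((δ:ℝ) + 2)) < μ := by
    rwa [Real.log_lt_log_iff (by positivity) hμR] at hlog2
  have hμ4 : 2 * δ + 4 ≤ μ := by
    have : ((2 * δ + 4 : ℕ) : ℝ) < μ := by push_cast; linarith
    exact_mod_cast this.le
  set m := μ / 2 with hm
  have hm1 : δ + 2 ≤ m := by omega
  have hm2 : m ≤ μ := by omega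
  have h2m : 2 * m ≤ μ ∧ μ ≤ 2 * m + 1 := by omega
  -- split the sum
  have hsplit : ∑ ℓ ∈ Finset.Icc (δ + 3) μ, μ / ℓ
      = ∑ ℓ ∈ Finset.Icc (δ + 3) m, μ / ℓ + ∑ ℓ ∈ Finset.Ioc m μ, μ / ℓ := by
    have e1 : Finset.Icc (δ + 3) μ = Finset.Ioc (δ + 2) μ := Finset.Icc_add_one_left_eq_Ioc _ _
    have e2 : Finset.Icc (δ + 3) m = Finset.Ioc (δ + 2) m := Finset.Icc_add_one_left_eq_Ioc _ _
    rw [e1, e2, Finset.sum_Ioc_consecutive _ (by omega) hm2]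
  rw [hsplit]
  -- second sum ≥ μ - m
  have hB : μ - m ≤ ∑ ℓ ∈ Finset.Ioc m μ, μ / ℓ := by
    calc μ - m = ∑ _ℓ ∈ Finset.Ioc m μ, 1 := by
          rw [Finset.sum_const, Nat.card_Ioc, smul_eq_mul, mul_one]
      _ ≤ _ := Finset.sum_le_sum (fun ℓ hℓ => by
          rw [Finset.mem_Ioc] at hℓ
          exact (Nat.one_le_div_iff (by omega)).mpr hℓ.2)
  -- first sum, real bound
  have hA : (μ:ℝ) * (Real.log (m + 1) - Real.log (δ + 3)) - (m - (δ + 2)) ≤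
      ((∑ ℓ ∈ Finset.Icc (δ + 3) m, μ / ℓ : ℕ) : ℝ) := by
    have hterm : ∀ ℓ ∈ Finset.Icc (δ + 3) m, (μ:ℝ) * (1 / ℓ) - 1 ≤ ((μ / ℓ : ℕ) : ℝ) := by
      intro ℓ hℓ
      rw [Finset.mem_Icc] at hℓ
      have hl0 : 0 < ℓ := by omega
      have hfl : μ < ℓ * (μ / ℓ) + ℓ := by
        have h1 := Nat.div_add_mod μ ℓ
        have h2 : μ % ℓ < ℓ := Nat.mod_lt _ hl0
        omega
      have hflR : (μ:ℝ) < ℓ * ((μ / ℓ : ℕ):ℝ) + ℓ := by exact_mod_cast hfl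
      have hlR : (0:ℝ) < ℓ := by exact_mod_cast hl0
      rw [mul_one_div, div_sub_one (by positivity), div_le_iff₀ hlR]
      nlinarith [hflR]
    have hsum := Finset.sum_le_sum hterm
    have htel := sum_inv_telescope (δ + 3) (by omega) m
    have hmul : (μ:ℝ) * (Real.log (m+1) - Real.log (δ+3)) ≤
        ∑ ℓ ∈ Finset.Icc (δ + 3) m, (μ:ℝ) * (1 / ℓ) := by
      rw [← Finset.mul_sum]
      apply mul_le_mul_of_nonneg_left _ (le_of_lt hμR)
      rw [show ((δ:ℝ)+3) = ((δ+3:ℕ):ℝ) by norm_num]; exact htel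
    have hcard : ((Finset.Icc (δ + 3) m).card : ℝ) = (m:ℝ) - (δ + 2) := by
      rw [Nat.card_Icc]
      have : m + 1 - (δ + 3) = m - (δ + 2) := by omega
      rw [this, Nat.cast_sub (by omega)]
      push_cast; ring
    have : ∑ ℓ ∈ Finset.Icc (δ + 3) m, ((μ:ℝ) * (1 / ℓ) - 1)
        = (∑ ℓ ∈ Finset.Icc (δ + 3) m, (μ:ℝ) * (1 / ℓ)) - ((m:ℝ) - (δ + 2)) := by
      rw [Finset.sum_sub_distrib, Finset.sum_const, nsmul_eq_mul, mul_one, hcard]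
    rw [this] at hsum
    rw [Nat.cast_sum]
    linarith
  -- final real computation
  have hlogm : Real.log μ - Real.log 2 ≤ Real.log (m + 1) := by
    have : (μ:ℝ) ≤ 2 * ((m:ℝ) + 1) := by
      have : μ ≤ 2 * m + 2 := by omega
      exact_mod_cast by push_cast; exact_mod_cast (by exact_mod_cast this : (μ:ℝ) ≤ ((2*m+2:ℕ):ℝ)) 
    have h1 : Real.log μ ≤ Real.log (2 * ((m:ℝ) + 1)) := Real.log_le_log hμR this
    rw [Real.log_mul (by norm_num) (by positivity)] at h1
    linarith
  have hlogd : Real.log 2 + Real.log ((δ:ℝ) + 3) ≤ 2 * Real.log ((δ:ℝ) + 2) := by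
    have h1 : (2 : ℝ) * ((δ:ℝ) + 3) ≤ ((δ:ℝ) + 2) ^ 2 := by
      have : (1:ℝ) ≤ (δ:ℝ) := by exact_mod_cast hδ
      nlinarith
    have h2 : Real.log (2 * ((δ:ℝ) + 3)) ≤ Real.log (((δ:ℝ) + 2) ^ 2) :=
      Real.log_le_log (by positivity) h1
    rw [Real.log_mul (by norm_num) (by positivity), Real.log_pow] at h2
    push_cast at h2
    linarith
  -- assemble
  have key : ((n₁ + μ + n₂ : ℕ) : ℝ) ≤
      ((∑ ℓ ∈ Finset.Icc (δ + 3) m, μ / ℓ : ℕ) : ℝ) + ((∑ ℓ ∈ Finset.Ioc m μ, μ / ℓ : ℕ) : ℝ) := by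
    have hBR : ((μ:ℝ) - m) ≤ ((∑ ℓ ∈ Finset.Ioc m μ, μ / ℓ : ℕ) : ℝ) := by
      have : ((μ - m : ℕ):ℝ) ≤ _ := Nat.cast_le.mpr hB
      rw [Nat.cast_sub hm2] at this
      exact this
    have hmR : 2 * (m:ℝ) ≤ μ := by exact_mod_cast by push_cast; exact_mod_cast (by exact_mod_cast h2m.1 : ((2*m:ℕ):ℝ) ≤ μ)
    have e1 : (μ:ℝ) * (Real.log μ - Real.log 2) ≤ (μ:ℝ) * Real.log (m+1) :=
      mul_le_mul_of_nonneg_left (by linarith) (le_of_lt hμR)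
    have e2 : (μ:ℝ) * (Real.log 2 + Real.log ((δ:ℝ)+3)) ≤ (μ:ℝ) * (2 * Real.log ((δ:ℝ)+2)) :=
      mul_le_mul_of_nonneg_left hlogd (le_of_lt hμR)
    push_cast
    push_cast at hA hBR
    nlinarith
  exact_mod_cast key

def bigraph {VL VR : Type*} (r : VL → VR → Prop) : SimpleGraph (VL ⊕ VR) where
  Adj x y := match x, y with
    | .inl v, .inr b => r v b
    | .inr b, .inl v => r v b
    | _, _ => False
  symm := by constructor; rintro (v | b) (v' | b') h <;> exact h
  loopless := by constructor; rintro (v | b) h <;> exact h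

@[simp] lemma bigraph_adj_ll {VL VR : Type*} (r : VL → VR → Prop) (v v' : VL) :
    ¬ (bigraph r).Adj (Sum.inl v) (Sum.inl v') := fun h => h
@[simp] lemma bigraph_adj_rr {VL VR : Type*} (r : VL → VR → Prop) (b b' : VR) :
    ¬ (bigraph r).Adj (Sum.inr b) (Sum.inr b') := fun h => h
@[simp] lemma bigraph_adj_lr {VL VR : Type*} (r : VL → VR → Prop) (v : VL) (b : VR) :
    (bigraph r).Adj (Sum.inl v) (Sum.inr b) ↔ r v b := Iff.rfl
@[simp] lemma bigraph_adj_rl {VL VR : Type*} (r : VL → VR → Prop) (v : VL) (b : VR) :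
    (bigraph r).Adj (Sum.inr b) (Sum.inl v) ↔ r v b := Iff.rfl


end Stmt12Aux

open Stmt12Aux

/-- the bipartite gadget graph for the MDG heuristic.  The left side is
`V = {u₁,…,u_{n₁}} ∪ {w₁,…,w_μ} ∪ {z₁,…,z_{n₂}}` (encoded `Fin n₁ ⊕ Fin μ ⊕ Fin n₂`)
and the right side is `Ṽ = {ũ₁,…,ũ_{n₁}} ∪ {w̃₁,…,w̃_μ}` (encoded `Fin n₁ ⊕ Fin μ`).
Property (4) is stated for the induced subgraph obtained by keeping a nonempty subset
`A` of the left side and all of the right side. -/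
theorem stmt12 (n₁ n₂ δ μ : ℕ) (hn₁ : 0 < n₁) (hn₂ : 0 < n₂) (hδ : 0 < δ) (hμ : 0 < μ)
    (h : (μ : ℝ) * (Real.log μ - 2 * Real.log (δ + 2) - 1) ≥ n₁ + n₂) :
    ∃ G : SimpleGraph ((Fin n₁ ⊕ Fin μ ⊕ Fin n₂) ⊕ (Fin n₁ ⊕ Fin μ)),
      -- (1) both sides are independent sets (in particular G is bipartite)
      (∀ x y : Fin n₁ ⊕ Fin μ ⊕ Fin n₂, ¬ G.Adj (Sum.inl x) (Sum.inl y)) ∧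
      (∀ x y : Fin n₁ ⊕ Fin μ, ¬ G.Adj (Sum.inr x) (Sum.inr y)) ∧
      -- (2) the edges {uᵢ, ũᵢ} and {wⱼ, w̃ⱼ} are present
      (∀ i : Fin n₁, G.Adj (Sum.inl (Sum.inl i)) (Sum.inr (Sum.inl i))) ∧
      (∀ j : Fin μ, G.Adj (Sum.inl (Sum.inr (Sum.inl j))) (Sum.inr (Sum.inr j))) ∧
      -- (3) every ũᵢ has degree 1
      (∀ i : Fin n₁, G.degree (Sum.inr (Sum.inl i)) = 1) ∧
      -- (4) in every induced subgraph S obtained by deleting left-side vertices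
      -- (keeping a nonempty set A of them), the maximum S-degree over the kept
      -- left-side vertices exceeds the maximum S-degree over Ṽ by more than δ
      (∀ A : Finset (Fin n₁ ⊕ Fin μ ⊕ Fin n₂), A.Nonempty →
        ∃ a ∈ A, ∀ b : Fin n₁ ⊕ Fin μ,
          (((A.image Sum.inl ∪ Finset.univ.image Sum.inr).filter
              (G.Adj (Sum.inr b))).card) + δ <
          (((A.image Sum.inl ∪ Finset.univ.image Sum.inr).filter
              (G.Adj (Sum.inl a))).card)) := by
  classical
  have hcap := capacity n₁ n₂ δ μ hδ (by omega) hμ h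
  set S : Finset (Σ _ : ℕ, ℕ) :=
    (Finset.Icc (δ + 3) μ).sigma (fun ℓ => Finset.range (μ / ℓ)) with hS
  have hScard : n₁ + μ + n₂ ≤ S.card := by
    rw [hS, Finset.card_sigma]
    simpa using hcap
  have hcardVL : Fintype.card (Fin n₁ ⊕ Fin μ ⊕ Fin n₂) ≤ Fintype.card ↥S := by
    simp only [Fintype.card_sum, Fintype.card_fin, Fintype.card_coe]
    omega
  obtain ⟨f⟩ := Function.Embedding.nonempty_of_card_le hcardVL
  set lev : (Fin n₁ ⊕ Fin μ ⊕ Fin n₂) → ℕ := fun v => ((f v : Σ _ : ℕ, ℕ)).1 with hlev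
  set pos : (Fin n₁ ⊕ Fin μ ⊕ Fin n₂) → ℕ := fun v => ((f v : Σ _ : ℕ, ℕ)).2 with hpos
  have hmem : ∀ v, δ + 3 ≤ lev v ∧ lev v ≤ μ ∧ pos v < μ / lev v := by
    intro v
    have hv := (f v).2
    simp only [hS, Finset.mem_sigma, Finset.mem_Icc, Finset.mem_range] at hv
    exact ⟨hv.1.1, hv.1.2, hv.2⟩
  have hblock : ∀ v, pos v * lev v + lev v ≤ μ := by
    intro v
    obtain ⟨h1, h2, h3⟩ := hmem v
    calc pos v * lev v + lev v = (pos v + 1) * lev v := by ring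
      _ ≤ (μ / lev v) * lev v := Nat.mul_le_mul_right _ h3
      _ ≤ μ := Nat.div_mul_le_self μ (lev v)
  have hinj : ∀ v w, lev v = lev w → pos v = pos w → v = w := by
    intro v w h1 h2
    apply f.injective
    apply Subtype.ext
    have ev : (f v : Σ _ : ℕ, ℕ) = ⟨lev v, pos v⟩ := rfl
    have ew : (f w : Σ _ : ℕ, ℕ) = ⟨lev w, pos w⟩ := rfl
    rw [ev, ew, h1, h2]
  set r : (Fin n₁ ⊕ Fin μ ⊕ Fin n₂) → (Fin n₁ ⊕ Fin μ) → Prop := fun v b =>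
    match b with
    | .inl i => v = .inl i
    | .inr j => v = .inr (.inl j) ∨
        (pos v * lev v ≤ (j : ℕ) ∧ (j : ℕ) < pos v * lev v + lev v) with hr
  refine ⟨bigraph r, fun x y => bigraph_adj_ll r x y, fun x y => bigraph_adj_rr r x y,
    fun i => ?_, fun j => ?_, fun i => ?_, fun A hA => ?_⟩
  · exact (bigraph_adj_lr r _ _).mpr rfl
  · exact (bigraph_adj_lr r _ _).mpr (Or.inl rfl)
  · -- degree of ũ_i is 1
    have hnb : (bigraph r).neighborFinset (Sum.inr (Sum.inl i)) = {Sum.inl (Sum.inl i)} := by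
      ext y
      rw [SimpleGraph.mem_neighborFinset, Finset.mem_singleton]
      cases y with
      | inl v =>
        rw [bigraph_adj_rl]
        simp only [hr]
        constructor
        · intro hv; rw [hv]
        · intro hv; exact Sum.inl_injective hv
      | inr b =>
        constructor
        · intro hf; exact absurd hf (bigraph_adj_rr r _ _)
        · intro hf; exact absurd hf (by simp)
    rw [← SimpleGraph.card_neighborFinset_eq_degree, hnb, Finset.card_singleton]
  · -- main property
    obtain ⟨a, haA, hamax⟩ := Finset.exists_max_image A lev hA
    refine ⟨a, haA, fun b => ?_⟩
    set T : Finset ((Fin n₁ ⊕ Fin μ ⊕ Fin n₂) ⊕ (Fin n₁ ⊕ Fin μ)) :=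
      A.image Sum.inl ∪ Finset.univ.image Sum.inr with hT
    -- RHS lower bound
    have hRHS : lev a ≤ (T.filter ((bigraph r).Adj (Sum.inl a))).card := by
      have hcard : (Finset.Ico (pos a * lev a) (pos a * lev a + lev a)).card = lev a := by
        rw [Nat.card_Ico]; omega
      rw [← hcard]
      apply Finset.card_le_card_of_injOn
        (fun t => Sum.inr (Sum.inr (⟨t % μ, Nat.mod_lt t hμ⟩ : Fin μ)))
      · intro t ht
        rw [Finset.mem_coe, Finset.mem_Ico] at ht
        have htμ : t < μ := lt_of_lt_of_le ht.2 (hblock a)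
        have hmod : ((⟨t % μ, Nat.mod_lt t hμ⟩ : Fin μ) : ℕ) = t := Nat.mod_eq_of_lt htμ
        refine Finset.mem_filter.mpr ⟨?_, ?_⟩
        · exact Finset.mem_union.mpr (Or.inr (Finset.mem_image.mpr ⟨_, Finset.mem_univ _, rfl⟩))
        · rw [bigraph_adj_lr]
          exact Or.inr ⟨by rw [hmod]; exact ht.1, by rw [hmod]; exact ht.2⟩
      · intro t ht t' ht' he
        simp only [Finset.coe_Ico, Set.mem_Ico] at ht ht'
        simp only [Sum.inr.injEq, Fin.mk.injEq] at he
        rwa [Nat.mod_eq_of_lt (lt_of_lt_of_le ht.2 (hblock a)),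
          Nat.mod_eq_of_lt (lt_of_lt_of_le ht'.2 (hblock a))] at he
    have hLb : (T.filter ((bigraph r).Adj (Sum.inr b))) =
        (A.filter (fun v => r v b)).image Sum.inl := by
      ext y
      cases y with
      | inl v =>
        constructor
        · intro hy
          obtain ⟨hmem', hadj⟩ := Finset.mem_filter.mp hy
          have hvA : v ∈ A := by
            rcases Finset.mem_union.mp hmem' with hm | hm
            · obtain ⟨v', hv', he⟩ := Finset.mem_image.mp hm
              obtain rfl : v' = v := Sum.inl_injective he
              exact hv'
            · obtain ⟨b', -, he⟩ := Finset.mem_image.mp hm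
              exact absurd he (by simp)
          exact Finset.mem_image.mpr ⟨v, Finset.mem_filter.mpr
            ⟨hvA, (bigraph_adj_rl r v b).mp hadj⟩, rfl⟩
        · intro hy
          obtain ⟨v', hv', he⟩ := Finset.mem_image.mp hy
          rw [Sum.inl_injective he] at hv'
          obtain ⟨hv'A, hrv⟩ := Finset.mem_filter.mp hv'
          refine Finset.mem_filter.mpr ⟨?_, (bigraph_adj_rl r v b).mpr hrv⟩
          exact Finset.mem_union.mpr (Or.inl (Finset.mem_image.mpr ⟨v, hv'A, rfl⟩))
      | inr b' =>
        constructor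
        · intro hy
          exact absurd (Finset.mem_filter.mp hy).2 (bigraph_adj_rr r _ _)
        · intro hy
          obtain ⟨v', -, he⟩ := Finset.mem_image.mp hy
          exact absurd he (by simp)
    have hLcard : (T.filter ((bigraph r).Adj (Sum.inr b))).card =
        (A.filter (fun v => r v b)).card := by
      rw [hLb, Finset.card_image_of_injective _ Sum.inl_injective]
    have hla : δ + 3 ≤ lev a := (hmem a).1
    cases b with
    | inl i =>
      have : (A.filter (fun v => r v (Sum.inl i))) ⊆ {Sum.inl i} := by
        intro v hv
        obtain ⟨-, hrv⟩ := Finset.mem_filter.mp hv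
        simp only [hr] at hrv
        rw [Finset.mem_singleton]
        exact hrv
      have hc : (T.filter ((bigraph r).Adj (Sum.inr (Sum.inl i)))).card ≤ 1 := by
        rw [hLcard]
        have h2 := le_trans (Finset.card_le_card this) (le_of_eq (Finset.card_singleton (Sum.inl i)))
        convert h2 using 3; rfl
      omega
    | inr j =>
      have hsub : (A.filter (fun v => r v (Sum.inr j))) ⊆
          insert (Sum.inr (Sum.inl j))
            (A.filter (fun v => pos v * lev v ≤ (j : ℕ) ∧ (j : ℕ) < pos v * lev v + lev v)) := by
        intro v hv
        obtain ⟨hvA, hrv⟩ := Finset.mem_filter.mp hv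
        simp only [hr] at hrv
        rcases hrv with hrv | hrv
        · exact Finset.mem_insert.mpr (Or.inl hrv)
        · exact Finset.mem_insert.mpr (Or.inr (Finset.mem_filter.mpr ⟨hvA, hrv⟩))
      have hstru : (A.filter (fun v => pos v * lev v ≤ (j : ℕ) ∧
          (j : ℕ) < pos v * lev v + lev v)).card ≤ (Finset.Icc (δ + 3) (lev a)).card := by
        apply Finset.card_le_card_of_injOn lev
        · intro v hv
          obtain ⟨hvA, -⟩ := Finset.mem_filter.mp hv
          exact Finset.mem_Icc.mpr ⟨(hmem v).1, hamax v hvA⟩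
        · intro v hv w hw hlw
          simp only [Finset.coe_filter, Set.mem_setOf_eq] at hv hw
          obtain ⟨-, hv1, hv2⟩ := hv
          obtain ⟨-, hw1, hw2⟩ := hw
          have hl0 : 0 < lev v := by have := (hmem v).1; omega
          have hpv : (j : ℕ) / lev v = pos v :=
            Nat.div_eq_of_lt_le hv1 (by rw [add_mul, one_mul]; exact hv2)
          have hpw : (j : ℕ) / lev w = pos w :=
            Nat.div_eq_of_lt_le hw1 (by rw [add_mul, one_mul]; exact hw2)
          apply hinj v w hlw
          rw [← hpv, ← hpw, hlw]
      have hc : (T.filter ((bigraph r).Adj (Sum.inr (Sum.inr j)))).card ≤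
          1 + (lev a + 1 - (δ + 3)) := by
        rw [hLcard]
        have h2 : (A.filter (fun v => r v (Sum.inr j))).card ≤ 1 + (lev a + 1 - (δ + 3)) := by
          calc (A.filter (fun v => r v (Sum.inr j))).card
              ≤ _ := Finset.card_le_card hsub
            _ ≤ _ + 1 := Finset.card_insert_le _ _
            _ ≤ (Finset.Icc (δ + 3) (lev a)).card + 1 := by omega
            _ = 1 + (lev a + 1 - (δ + 3)) := by rw [Nat.card_Icc]; omega
        convert h2 using 3
      omega

end
end
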